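/- arXiv:1912.04193 — 5 statements merged into one kernel-verified Lean document; each statement's English description precedes it below -/
import Mathlib

section
/- For every real number ν and every z > 0, the two classical integral representations of the modified Bessel function of the second kind agree: ∫₀^∞ e^{-z·cosh(t)} · cosh(ν t) dt = 2^{-ν-1} · z^ν · ∫₀^∞ e^{-u} · e^{-z²/(4u)} · u^{-ν-1} du. -/
/-!
Substitute `u = (z / 2) * exp s`, which maps `ℝ` onto `(0, ∞)`. Since
`z ^ 2 / (4 * u) = (z / 2) * exp (-s)`, the two exponentials combine to `exp (-z * cosh s)`, while
`u ^ (-ν - 1) du = (z / 2) ^ (-ν) * exp (-ν * s) ds`. As `exp (-z * cosh s)` is even, its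
integral against `exp (-ν * s)` over `ℝ` equals its integral against `cosh (ν * s)`, which is twice
the integral over `(0, ∞)`. Integrability, needed to split `cosh` into exponentials, comes from the
Gaussian bound `cosh t ≥ 1 + t ^ 2 / 2`.
-/

open Real MeasureTheory Set

theorem Real.one_add_sq_div_two_le_cosh (t : ℝ) : 1 + t ^ 2 / 2 ≤ cosh t := by
  have h_half : (t / 2) ^ 2 ≤ sinh (t / 2) ^ 2 := by
    rw [← sq_abs, ← sq_abs (sinh _), abs_sinh]
    exact pow_le_pow_left₀ (abs_nonneg _) (self_le_sinh_iff.mpr (abs_nonneg _)) 2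
  have h_double : cosh t = 1 + 2 * sinh (t / 2) ^ 2 := by
    have h := cosh_two_mul (t / 2)
    rw [mul_div_cancel₀ t two_ne_zero, cosh_sq] at h
    linarith
  nlinarith

theorem integrable_exp_neg_mul_cosh_mul_exp (ν : ℝ) {z : ℝ} (hz : 0 < z) :
    Integrable fun t => exp (-z * cosh t) * exp (ν * t) := by
  have h_gauss : Integrable fun t =>
      exp (-z + ν ^ 2 / (2 * z)) * exp (-(z / 2) * (t - ν / z) ^ 2) :=
    ((integrable_exp_neg_mul_sq (half_pos hz)).comp_sub_right (ν / z)).const_mul _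
  refine h_gauss.mono' (by fun_prop) (Filter.Eventually.of_forall fun t => ?_)
  rw [norm_of_nonneg (by positivity), ← exp_add, ← exp_add, exp_le_exp]
  have h_cosh : -z * cosh t ≤ -z * (1 + t ^ 2 / 2) :=
    mul_le_mul_of_nonpos_left (one_add_sq_div_two_le_cosh t) (neg_nonpos.mpr hz.le)
  have h_square : -z + ν ^ 2 / (2 * z) + -(z / 2) * (t - ν / z) ^ 2
      = -z * (1 + t ^ 2 / 2) + ν * t := by
    field_simp
    ring
  linarith

theorem integral_comp_mul_exp {E : Type*} [NormedAddCommGroup E] [NormedSpace ℝ E]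
    (g : ℝ → E) {c : ℝ} (hc : 0 < c) :
    ∫ s, (c * exp s) • g (c * exp s) = ∫ u in Ioi 0, g u := by
  have h_exp : ∫ s, exp s • g (c * exp s) = ∫ v in Ioi 0, g (c * v) := by
    rw [← range_exp, ← image_univ, integral_image_eq_integral_abs_deriv_smul MeasurableSet.univ
      (fun s _ => (hasDerivAt_exp s).hasDerivWithinAt) exp_injective.injOn, Measure.restrict_univ]
    simp only [abs_of_pos (exp_pos _)]
  rw [← mul_zero c, ← integral_comp_mul_left_Ioi' g 0 hc, ← h_exp, ← integral_smul]
  simp only [smul_smul]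

theorem integral_mul_exp_eq_two_mul_integral_Ioi_mul_cosh {F : ℝ → ℝ} (hF : F.Even) (ν : ℝ)
    (h_int : Integrable fun s => F s * exp (ν * s)) :
    ∫ s, F s * exp (ν * s) = 2 * ∫ s in Ioi 0, F s * cosh (ν * s) := by
  have h_reflect : ∫ s, F s * exp (-(ν * s)) = ∫ s, F s * exp (ν * s) := by
    rw [← integral_neg_eq_self]
    simp only [hF _, mul_neg, neg_neg]
  have h_int_reflect : Integrable fun s => F s * exp (-(ν * s)) := by
    simpa only [hF _, mul_neg] using h_int.comp_neg
  have h_cosh : ∫ s, F s * cosh (ν * s) = ∫ s, F s * exp (ν * s) := by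
    simp only [cosh_eq, mul_div_assoc', mul_add, integral_div, integral_add h_int h_int_reflect,
      h_reflect, add_self_div_two]
  rw [← h_cosh, ← integral_comp_abs (f := fun s => F s * cosh (ν * s))]
  congr 1 with s
  rcases abs_choice s with hs | hs <;> simp only [hs, hF _, mul_neg, cosh_neg]

theorem half_mul_exp_mul_integrand_eq (ν : ℝ) {z : ℝ} (hz : 0 < z) (s : ℝ) :
    z / 2 * exp s * (exp (-(z / 2 * exp s)) * exp (-z ^ 2 / (4 * (z / 2 * exp s)))
      * (z / 2 * exp s) ^ (-ν - 1)) = (z / 2) ^ (-ν) * (exp (-z * cosh s) * exp (-(ν * s))) := by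
  have hu : 0 < z / 2 * exp s := by positivity
  have h_exp : exp (-(z / 2 * exp s)) * exp (-z ^ 2 / (4 * (z / 2 * exp s)))
      = exp (-z * cosh s) := by
    rw [← exp_add, cosh_eq, exp_neg]
    congr 1
    field_simp
    ring
  have h_rpow :
      z / 2 * exp s * (z / 2 * exp s) ^ (-ν - 1) = (z / 2) ^ (-ν) * exp (-(ν * s)) := by
    rw [rpow_sub_one hu.ne', mul_div_cancel₀ _ hu.ne', mul_rpow (by positivity) (exp_pos s).le,
      ← exp_mul, mul_neg, mul_comm s]
  rw [h_exp, mul_left_comm, h_rpow]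
  ring

theorem two_rpow_mul_rpow_mul_half_rpow (ν : ℝ) {z : ℝ} (hz : 0 < z) :
    (2 : ℝ) ^ (-ν - 1) * z ^ ν * (z / 2) ^ (-ν) = 2⁻¹ := by
  rw [div_rpow hz.le zero_le_two, rpow_sub_one two_ne_zero, rpow_neg hz.le, rpow_neg zero_le_two]
  have hz_rpow : z ^ ν ≠ 0 := (rpow_pos_of_pos hz ν).ne'
  have h2_rpow : (2 : ℝ) ^ ν ≠ 0 := (rpow_pos_of_pos two_pos ν).ne'
  field_simp

/-- The two classical integral representations of the modified Bessel function of the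
second kind `K_ν(z)` agree for every real `ν` and every `z > 0`. -/
theorem besselK_integral_representations (ν z : ℝ) (hz : 0 < z) :
    ∫ t in Set.Ioi (0:ℝ), Real.exp (-z * Real.cosh t) * Real.cosh (ν * t)
      = (2:ℝ) ^ (-ν - 1) * z ^ ν *
        ∫ u in Set.Ioi (0:ℝ), Real.exp (-u) * Real.exp (-z ^ 2 / (4 * u)) * u ^ (-ν - 1) := by
  have h_subst : ∫ u in Ioi 0, exp (-u) * exp (-z ^ 2 / (4 * u)) * u ^ (-ν - 1)
      = (z / 2) ^ (-ν) * ∫ s, exp (-z * cosh s) * exp (-(ν * s)) := by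
    rw [← integral_comp_mul_exp _ (half_pos hz), ← integral_const_mul]
    simp only [smul_eq_mul, half_mul_exp_mul_integrand_eq ν hz]
  have h_symm := integral_mul_exp_eq_two_mul_integral_Ioi_mul_cosh
    (F := fun t => exp (-z * cosh t)) (fun t => by simp only [cosh_neg]) (-ν)
    (integrable_exp_neg_mul_cosh_mul_exp (-ν) hz)
  simp only [neg_mul ν, cosh_neg] at h_symm
  rw [h_subst, h_symm, ← mul_assoc, two_rpow_mul_rpow_mul_half_rpow ν hz]
  ring
end

section
/- Let a > 0, t > 0 and x ∈ ℝ. Then ∫₀^∞ (2πs)^{-1/2} e^{-(x-as)²/(2s)} · (t/(√(2π) s^{3/2})) e^{-t²/(2s)} ds = (a t e^{ax}/π) · K₁(a√(x²+t²)) / √(x²+t²). In other words, the density at time t of a Brownian motion with drift a subordinated by an independent 1/2-stable subordinator has the stated closed form. -/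
/-!
Multiplying out, the integrand is `t e^{ax} / (2π) · s⁻² · exp (-(r²/(2s) + a²s/2))` with
`r = √(x² + t²)`. The substitution `s = (r/a) eᵘ` turns the exponent into `-a r cosh u`, so the
integral becomes the whole-line representation `2 K_ν(z) = ∫ exp (ν u - z cosh u) du` at
`ν = -1`, and `K₋₁ = K₁`.
-/

open Real MeasureTheory

/-- The modified Bessel function of the second kind, `K_ν(z)`,
for `ν : ℝ` and `z > 0`. -/
noncomputable def besselK (ν z : ℝ) : ℝ :=
  ∫ t in Set.Ioi (0:ℝ), Real.exp (-z * Real.cosh t) * Real.cosh (ν * t)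

open Set

lemma besselK_neg (ν z : ℝ) : besselK (-ν) z = besselK ν z := by
  simp only [besselK, neg_mul, cosh_neg]

lemma integrable_exp_mul_sub_mul_cosh (ν : ℝ) {z : ℝ} (hz : 0 < z) :
    Integrable fun u => exp (ν * u - z * cosh u) := by
  -- `cosh u ≥ u² / 4` yields the Gaussian majorant `exp (2ν²/z) · exp (-(z/8) u²)`.
  refine ((integrable_exp_neg_mul_sq (by positivity : 0 < z / 8)).const_mul
    (exp (2 * ν ^ 2 / z))).mono' (by fun_prop) (ae_of_all _ fun u => ?_)
  have hcosh : u ^ 2 / 4 ≤ cosh u := by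
    have := quadratic_le_exp_of_nonneg (abs_nonneg u)
    rw [← cosh_abs, cosh_eq]
    nlinarith [sq_abs u, exp_pos (-|u|), abs_nonneg u]
  have hsq : 0 ≤ (z * u - 4 * ν) ^ 2 / (8 * z) := by positivity
  rw [norm_of_nonneg (exp_pos _).le, ← exp_add]
  refine exp_le_exp.2 ?_
  have hquad : ν * u - z * u ^ 2 / 4 ≤ 2 * ν ^ 2 / z + -(z / 8) * u ^ 2 := by
    field_simp at hsq ⊢
    nlinarith [hsq]
  nlinarith [mul_le_mul_of_nonneg_left hcosh hz.le, hquad]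

lemma integral_exp_mul_sub_mul_cosh (ν : ℝ) {z : ℝ} (hz : 0 < z) :
    ∫ u, exp (ν * u - z * cosh u) = 2 * besselK ν z := by
  set f := fun u => exp (ν * u - z * cosh u)
  have hf := integrable_exp_mul_sub_mul_cosh ν hz
  have hsymm : ∫ u, f u = ∫ u, (f u + f (-u)) / 2 := by
    rw [integral_div, integral_add hf hf.comp_neg, integral_neg_eq_self (f := f)]
    ring
  have heven : ∀ u, (f u + f (-u)) / 2 = exp (-z * cosh |u|) * cosh (ν * |u|) := by
    intro u
    rcases abs_choice u with h | h <;> rw [h] <;>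
      simp only [f, cosh_neg, mul_neg, neg_mul, cosh_eq (ν * u), sub_eq_add_neg, exp_add] <;> ring
  rw [hsymm, funext heven, integral_comp_abs (f := fun u => exp (-z * cosh u) * cosh (ν * u)),
    besselK]

lemma integral_Ioi_zero_eq_integral_exp_smul_comp_exp {E : Type*} [NormedAddCommGroup E]
    [NormedSpace ℝ E] (g : ℝ → E) : ∫ s in Ioi 0, g s = ∫ u, exp u • g (exp u) := by
  rw [← range_exp, ← image_univ, integral_image_eq_integral_abs_deriv_smul MeasurableSet.univ
    (fun u _ => (hasDerivAt_exp u).hasDerivWithinAt) exp_injective.injOn, Measure.restrict_univ]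
  simp only [abs_of_pos (exp_pos _)]

theorem integral_rpow_mul_exp_neg_mul_add_inv (ν : ℝ) {c z : ℝ} (hc : 0 < c) (hz : 0 < z) :
    ∫ s in Ioi 0, s ^ (ν - 1) * exp (-(z / 2) * (s / c + c / s)) = 2 * c ^ ν * besselK ν z := by
  have hpt : ∀ u, exp (u + log c) * (exp (u + log c) ^ (ν - 1) *
      exp (-(z / 2) * (exp (u + log c) / c + c / exp (u + log c))))
      = c ^ ν * exp (ν * u - z * cosh u) := by
    intro u
    rw [← exp_mul, rpow_def_of_pos hc, ← exp_add, ← exp_add, ← exp_add]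
    congr 1
    rw [exp_add, exp_log hc, cosh_eq, exp_neg]
    field_simp
    ring
  rw [integral_Ioi_zero_eq_integral_exp_smul_comp_exp,
    ← integral_add_right_eq_self _ (log c)]
  simp only [smul_eq_mul, hpt, integral_const_mul, integral_exp_mul_sub_mul_cosh ν hz]
  ring

lemma gaussian_mul_stable_density_eq {a t x r s : ℝ} (ha : a ≠ 0) (hr : r ≠ 0)
    (hr2 : r ^ 2 = x ^ 2 + t ^ 2) (hs : 0 < s) :
    (1 / √(2 * π * s)) * exp (-(x - a * s) ^ 2 / (2 * s)) *
        (t / (√(2 * π) * s ^ ((3:ℝ)/2)) * exp (-t ^ 2 / (2 * s)))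
      = t * exp (a * x) / (2 * π) *
          (s ^ ((-1:ℝ) - 1) * exp (-(a * r / 2) * (s / (r / a) + r / a / s))) := by
  have hsqrt : √(2 * π * s) * (√(2 * π) * s ^ ((3:ℝ)/2)) = 2 * π * s ^ 2 := by
    rw [show (3:ℝ)/2 = 1 + 1/2 by norm_num, rpow_add hs, rpow_one, ← sqrt_eq_rpow,
      sqrt_mul (by positivity), mul_mul_mul_comm, mul_self_sqrt (by positivity)]
    linear_combination (2 * π * s) * mul_self_sqrt hs.le
  have hexp : exp (-(x - a * s) ^ 2 / (2 * s)) * exp (-t ^ 2 / (2 * s))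
      = exp (a * x) * exp (-(a * r / 2) * (s / (r / a) + r / a / s)) := by
    rw [← exp_add, ← exp_add]
    congr 1
    field_simp
    linear_combination hr2
  calc _ = t / (√(2 * π * s) * (√(2 * π) * s ^ ((3:ℝ)/2))) *
        (exp (-(x - a * s) ^ 2 / (2 * s)) * exp (-t ^ 2 / (2 * s))) := by ring
    _ = _ := by
      rw [hsqrt, hexp, show (-1:ℝ) - 1 = -2 by norm_num, rpow_neg hs.le, rpow_two]
      ring

/-- The density at time `t` of a Brownian motion with drift `a > 0` subordinated by an
independent 1/2-stable subordinator has the closed form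
`p_t(x) = (a t e^{ax}/π) K₁(a√(x²+t²))/√(x²+t²)`. -/
theorem subordinated_density_closed_form (a t x : ℝ) (ha : 0 < a) (ht : 0 < t) :
    ∫ s in Set.Ioi (0:ℝ),
        (1 / Real.sqrt (2 * π * s)) * Real.exp (-(x - a * s) ^ 2 / (2 * s)) *
          (t / (Real.sqrt (2 * π) * s ^ ((3:ℝ)/2)) * Real.exp (-t ^ 2 / (2 * s)))
      = a * t * Real.exp (a * x) / π * besselK 1 (a * Real.sqrt (x ^ 2 + t ^ 2)) /
          Real.sqrt (x ^ 2 + t ^ 2) := by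
  have hr : 0 < √(x ^ 2 + t ^ 2) := sqrt_pos.2 (by positivity)
  have hr2 : √(x ^ 2 + t ^ 2) ^ 2 = x ^ 2 + t ^ 2 := sq_sqrt (by positivity)
  rw [setIntegral_congr_fun measurableSet_Ioi
      fun s hs => gaussian_mul_stable_density_eq ha.ne' hr.ne' hr2 hs, integral_const_mul,
    integral_rpow_mul_exp_neg_mul_add_inv _ (div_pos hr ha) (mul_pos ha hr), besselK_neg,
    rpow_neg_one]
  field_simp
end

section
/- Let a > 0 and x ∈ ℝ with x ≠ 0. Then ∫₀^∞ (2πs)^{-1/2} e^{-(x-as)²/(2s)} · (2π)^{-1/2} s^{-3/2} ds = a e^{ax} K₁(a|x|) / (π |x|). In particular the Lévy measure of the Brownian motion with drift a subordinated by an independent 1/2-stable subordinator has density ν(x) = (a e^{ax}/π)·K₁(a|x|)/|x| on ℝ\{0}. -/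
open Real MeasureTheory

/-!
Completing the square, the integrand is `e^{ax}/(2π) · s⁻² e^{-(x²/s + a²s)/2}`. The
substitution `s = (|x|/a) eᵗ` turns `s⁻² e^{-(x²/s + a²s)/2} ds` into
`(a/|x|) e^{-t} e^{-z cosh t} dt` on `ℝ`, where `z = a|x|`. As `e^{-z cosh t}` is even in `t`,
the odd part `-sinh t` of `e^{-t}` integrates to zero, and the integral of the even function
`cosh t · e^{-z cosh t}` over `ℝ` is `2 K₁(z)`.
-/

open Set

lemma integral_Ioi_eq_integral_comp_mul_exp {E : Type*} [NormedAddCommGroup E] [NormedSpace ℝ E]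
    (f : ℝ → E) {k : ℝ} (hk : 0 < k) :
    ∫ s in Ioi 0, f s = ∫ t, (k * exp t) • f (k * exp t) := by
  have himage : (fun t => k * exp t) '' univ = Ioi 0 := by
    rw [image_univ, show (fun t => k * exp t) = (k * ·) ∘ exp from rfl, range_comp, range_exp,
      image_mul_left_Ioi hk, mul_zero]
  have hderiv : ∀ t ∈ univ, HasDerivWithinAt (fun t => k * exp t) (k * exp t) univ t :=
    fun t _ => ((hasDerivAt_exp t).const_mul k).hasDerivWithinAt
  have hinj : InjOn (fun t => k * exp t) univ :=
    fun u _ v _ huv => exp_injective (mul_left_cancel₀ hk.ne' huv)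
  rw [← himage, integral_image_eq_integral_abs_deriv_smul MeasurableSet.univ hderiv hinj,
    Measure.restrict_univ]
  simp only [abs_of_pos (mul_pos hk (exp_pos _))]

lemma sq_div_four_le_cosh (t : ℝ) : t ^ 2 / 4 ≤ cosh t := by
  have h := quadratic_le_exp_of_nonneg (abs_nonneg t)
  rw [sq_abs] at h
  linarith [exp_abs_le t, cosh_eq t, abs_nonneg t]

lemma mul_exp_neg_le_one (y : ℝ) : y * exp (-y) ≤ 1 := by
  calc y * exp (-y) ≤ exp y * exp (-y) := by
        gcongr; linarith [add_one_le_exp y]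
    _ = 1 := by rw [← exp_add, add_neg_cancel, exp_zero]

lemma mul_exp_neg_mul_le {z : ℝ} (hz : 0 < z) (u : ℝ) :
    u * exp (-z * u) ≤ 2 / z * exp (-(z / 2 * u)) := by
  calc u * exp (-z * u) = 2 / z * (z / 2 * u * exp (-(z / 2 * u))) * exp (-(z / 2 * u)) := by
        rw [show -z * u = -(z / 2 * u) + -(z / 2 * u) by ring, exp_add]; field_simp
    _ ≤ 2 / z * 1 * exp (-(z / 2 * u)) := by gcongr; exact mul_exp_neg_le_one _
    _ = 2 / z * exp (-(z / 2 * u)) := by rw [mul_one]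

lemma abs_sinh_div_cosh_le_one (t : ℝ) : |sinh t / cosh t| ≤ 1 := by
  rw [abs_div, abs_of_pos (cosh_pos t), div_le_one (cosh_pos t), abs_le]
  constructor <;> linarith [sinh_lt_cosh (x := t), sinh_lt_cosh (x := -t), sinh_neg t, cosh_neg t]

lemma integrable_cosh_mul_exp_neg_mul_cosh {z : ℝ} (hz : 0 < z) :
    Integrable fun t => cosh t * exp (-z * cosh t) := by
  refine ((integrable_exp_neg_mul_sq (b := z / 8) (by positivity)).const_mul (2 / z)).mono'
    (by fun_prop) (Filter.Eventually.of_forall fun t => ?_)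
  rw [norm_of_nonneg (by positivity [cosh_pos t])]
  calc cosh t * exp (-z * cosh t) ≤ 2 / z * exp (-(z / 2 * cosh t)) := mul_exp_neg_mul_le hz _
    _ ≤ 2 / z * exp (-(z / 8) * t ^ 2) := by
      gcongr
      nlinarith [sq_div_four_le_cosh t]

lemma integral_exp_neg_mul_eq_integral_cosh_mul {g : ℝ → ℝ} (hg : ∀ t, g (-t) = g t)
    (hint : Integrable fun t => cosh t * g t) :
    ∫ t, exp (-t) * g t = ∫ t, cosh t * g t := by
  have hsinh : Integrable fun t => sinh t * g t := by
    refine (hint.bdd_mul (c := 1)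
      (continuous_sinh.div continuous_cosh fun t => (cosh_pos t).ne').aestronglyMeasurable
      (Filter.Eventually.of_forall fun t => abs_sinh_div_cosh_le_one t)).congr
      (Filter.Eventually.of_forall fun t => ?_)
    simp only [Pi.div_apply]
    field_simp [(cosh_pos t).ne']
  have hodd : ∫ t, sinh t * g t = 0 := by
    have h := integral_neg_eq_self (fun t => sinh t * g t) volume
    simp only [sinh_neg, hg, neg_mul, integral_neg] at h
    linarith
  simp_rw [← cosh_sub_sinh, sub_mul]
  rw [integral_sub hint hsinh, hodd, sub_zero]

lemma integral_cosh_mul_exp_neg_mul_cosh (z : ℝ) :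
    ∫ t, cosh t * exp (-z * cosh t) = 2 * besselK 1 z := by
  have h := integral_comp_abs (f := fun t => cosh t * exp (-z * cosh t))
  simp only [cosh_abs] at h
  rw [h, besselK]
  simp only [mul_one, mul_comm]

lemma integral_inv_sq_mul_exp_eq_besselK_one {b c : ℝ} (hb : 0 < b) (hc : 0 < c) :
    ∫ s in Ioi 0, 1 / s ^ 2 * exp (-(c ^ 2 / s + b ^ 2 * s) / 2)
      = 2 * (b / c) * besselK 1 (b * c) := by
  have hk : 0 < c / b := div_pos hc hb
  have hsub : ∀ t, (c / b * exp t) • (1 / (c / b * exp t) ^ 2 *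
      exp (-(c ^ 2 / (c / b * exp t) + b ^ 2 * (c / b * exp t)) / 2))
      = b / c * (exp (-t) * exp (-(b * c) * cosh t)) := by
    intro t
    rw [smul_eq_mul, cosh_eq, exp_neg]
    field_simp
    ring_nf
  rw [integral_Ioi_eq_integral_comp_mul_exp _ hk, funext hsub, integral_const_mul,
    integral_exp_neg_mul_eq_integral_cosh_mul (by simp [cosh_neg])
      (integrable_cosh_mul_exp_neg_mul_cosh (by positivity)),
    integral_cosh_mul_exp_neg_mul_cosh]
  ring

lemma rpow_neg_three_halves {s : ℝ} (hs : 0 < s) : s ^ (-(3:ℝ)/2) = 1 / (s * √s) := by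
  rw [show -(3:ℝ)/2 = -(1 + 1/2) by norm_num, rpow_neg hs.le, rpow_add hs, rpow_one,
    ← sqrt_eq_rpow, one_div]

/-- The Lévy measure of a Brownian motion with drift `a > 0` subordinated by an independent
1/2-stable subordinator has density `ν(x) = (a e^{ax}/π) K₁(a|x|)/|x|` on `ℝ \ {0}`. -/
theorem subordinated_levy_density_closed_form (a x : ℝ) (ha : 0 < a) (hx : x ≠ 0) :
    ∫ s in Set.Ioi (0:ℝ),
        (1 / Real.sqrt (2 * π * s)) * Real.exp (-(x - a * s) ^ 2 / (2 * s)) *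
          ((1 / Real.sqrt (2 * π)) * s ^ (-(3:ℝ)/2))
      = a * Real.exp (a * x) * besselK 1 (a * |x|) / (π * |x|) := by
  have hintegrand : ∀ s ∈ Ioi (0:ℝ),
      (1 / √(2 * π * s)) * exp (-(x - a * s) ^ 2 / (2 * s)) * ((1 / √(2 * π)) * s ^ (-(3:ℝ)/2))
        = exp (a * x) / (2 * π) * (1 / s ^ 2 * exp (-(|x| ^ 2 / s + a ^ 2 * s) / 2)) := by
    intro s (hs : 0 < s)
    have hexp : exp (-(x - a * s) ^ 2 / (2 * s))
        = exp (a * x) * exp (-(|x| ^ 2 / s + a ^ 2 * s) / 2) := by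
      rw [← exp_add, sq_abs]; congr 1; field_simp; ring
    have h2π : √(2 * π) ^ 2 = 2 * π := sq_sqrt (by positivity)
    have hs2 : √s ^ 2 = s := sq_sqrt hs.le
    rw [sqrt_mul (by positivity), rpow_neg_three_halves hs, hexp]
    field_simp
    rw [h2π, hs2]
  have hc : 0 < |x| := abs_pos.mpr hx
  rw [setIntegral_congr_fun measurableSet_Ioi hintegrand, integral_const_mul,
    integral_inv_sq_mul_exp_eq_besselK_one ha hc]
  field_simp
end

section
/- Let a > 0 and ε > 0. Then lim_{t→0⁺} sup_{|x| ≥ ε} | (a e^{ax}/π) · K₁(a√(x²+t²))/√(x²+t²) − (a e^{ax}/π) · K₁(a|x|)/|x| | = 0. Equivalently, for the Brownian motion with drift a subordinated by an independent 1/2-stable subordinator, p_t(x)/t converges to the Lévy density ν(x) = (a e^{ax}/π) K₁(a|x|)/|x| uniformly on {|x| ≥ ε} as t → 0⁺, where p_t(x) = (a t e^{ax}/π) K₁(a√(x²+t²))/√(x²+t²). -/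
/-!
Write `K₁(z) = ∫₀^∞ e^{-z cosh u} cosh u du`. For `ε ≤ r ≤ s` and `x ≤ r`, comparing integrands
pointwise shows `0 ≤ e^{ax} (K₁(ar)/r - K₁(as)/s) ≤ C (s - r)`: the factor `e^{ar}` is absorbed by
`e^{ar - ar cosh u} ≤ e^{aε (1 - cosh u)}`, which gives a majorant independent of `r`. With
`r = |x|` and `s = √(x² + t²) ≤ |x| + t` the difference of the densities is `O(t)` uniformly on
`|x| ≥ ε`.
-/

open Real MeasureTheory Filter Topology

open Set
open scoped Nat

lemma pow_mul_exp_neg_mul_le {b x : ℝ} (hb : 0 < b) (hx : 0 ≤ x) (k : ℕ) :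
    x ^ k * exp (-b * x) ≤ k ! * (2 / b) ^ k * exp (-(b / 2) * x) := by
  have hk : (b / 2 * x) ^ k / k ! ≤ exp (b / 2 * x) :=
    Real.pow_div_factorial_le_exp _ (by positivity) k
  have hsplit : exp (-(b / 2) * x) = exp (b / 2 * x) * exp (-b * x) := by
    rw [← exp_add]; ring_nf
  rw [div_le_iff₀ (by positivity), mul_pow] at hk
  rw [hsplit, ← mul_assoc]
  gcongr
  calc x ^ k = (2 / b) ^ k * ((b / 2) ^ k * x ^ k) := by
        rw [← mul_assoc, ← mul_pow, div_mul_div_cancel₀ (by positivity), div_self two_ne_zero,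
          one_pow, one_mul]
    _ ≤ (2 / b) ^ k * (exp (b / 2 * x) * k !) := by gcongr
    _ = _ := by ring

lemma integrableOn_exp_neg_mul_cosh_mul_cosh_pow {z : ℝ} (hz : 0 < z) (k : ℕ) :
    IntegrableOn (fun u => exp (-z * cosh u) * cosh u ^ k) (Ioi 0) := by
  refine ((exp_neg_integrableOn_Ioi 0 (half_pos hz)).const_mul (k ! * (2 / z) ^ k)).mono'
    (by fun_prop : Continuous _).aestronglyMeasurable ?_
  filter_upwards [ae_restrict_mem measurableSet_Ioi] with u hu
  rw [norm_of_nonneg (by positivity), mul_comm]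
  calc cosh u ^ k * exp (-z * cosh u) ≤ k ! * (2 / z) ^ k * exp (-(z / 2) * cosh u) :=
        pow_mul_exp_neg_mul_le hz (cosh_pos u).le k
    _ ≤ k ! * (2 / z) ^ k * exp (-(z / 2) * u) := by
        have hu_le : u ≤ cosh u := (self_le_sinh_iff.2 (le_of_lt hu)).trans (sinh_lt_cosh u).le
        gcongr _ * exp ?_
        nlinarith

lemma exp_neg_mul_mul_div_le_of_le {a r s c : ℝ} (ha : 0 ≤ a) (hr : 0 < r) (hrs : r ≤ s)
    (hc : 0 ≤ c) :
    exp (-(a * s) * c) / s ≤ exp (-(a * r) * c) / r := by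
  have hexp : exp (-(a * s) * c) ≤ exp (-(a * r) * c) :=
    exp_le_exp.2 (by nlinarith [mul_nonneg ha hc])
  exact div_le_div₀ (exp_pos _).le hexp hr hrs

lemma exp_mul_sub_exp_neg_mul_div_le {a ε r s c : ℝ} (ha : 0 ≤ a) (hε : 0 < ε) (hr : ε ≤ r)
    (hrs : r ≤ s) (hc : 1 ≤ c) :
    exp (a * r) * (exp (-(a * r) * c) / r - exp (-(a * s) * c) / s) ≤
      exp (a * ε) * exp (-(a * ε) * c) * (1 / ε ^ 2 + a * c / ε) * (s - r) := by
  have hr0 : 0 < r := hε.trans_le hr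
  have hs0 : 0 < s := hr0.trans_le hrs
  set E := exp (-(a * r) * c)
  have hE : 0 < E := exp_pos _
  -- `exp (-x) ≥ 1 - x` with `x = a (s - r) c`
  have hdrop : E - exp (-(a * s) * c) ≤ E * (a * c * (s - r)) := by
    have hsplit : exp (-(a * s) * c) = E * exp (-(a * c * (s - r))) := by
      rw [← exp_add]; ring_nf
    nlinarith [add_one_le_exp (-(a * c * (s - r)))]
  have hdecay : exp (a * r) * E ≤ exp (a * ε) * exp (-(a * ε) * c) := by
    rw [← exp_add, ← exp_add]
    exact exp_le_exp.2 (by nlinarith [mul_nonneg ha (sub_nonneg.2 hr)])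
  calc exp (a * r) * (E / r - exp (-(a * s) * c) / s)
      = exp (a * r) * E * ((s - r) / (r * s)) + exp (a * r) * (E - exp (-(a * s) * c)) / s := by
        field_simp; ring
    _ ≤ exp (a * r) * E * ((s - r) / ε ^ 2) + exp (a * r) * (E * (a * c * (s - r))) / ε := by
        have : 0 ≤ s - r := sub_nonneg.2 hrs
        gcongr
        · nlinarith
        · linarith
    _ = exp (a * r) * E * (1 / ε ^ 2 + a * c / ε) * (s - r) := by ring
    _ ≤ _ := by gcongr

lemma abs_exp_mul_sub_exp_neg_mul_div_le {a ε r s x c : ℝ} (ha : 0 ≤ a) (hε : 0 < ε) (hr : ε ≤ r)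
    (hrs : r ≤ s) (hx : x ≤ r) (hc : 1 ≤ c) :
    |exp (a * x) * (exp (-(a * r) * c) * c / r - exp (-(a * s) * c) * c / s)| ≤
      exp (a * ε) * exp (-(a * ε) * c) * c * (1 / ε ^ 2 + a * c / ε) * (s - r) := by
  have hψ :=
    sub_nonneg.2 (exp_neg_mul_mul_div_le_of_le ha (hε.trans_le hr) hrs (zero_le_one.trans hc))
  have hfactor : exp (-(a * r) * c) * c / r - exp (-(a * s) * c) * c / s =
      c * (exp (-(a * r) * c) / r - exp (-(a * s) * c) / s) := by ring
  rw [hfactor, abs_of_nonneg (by positivity)]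
  calc exp (a * x) * (c * (exp (-(a * r) * c) / r - exp (-(a * s) * c) / s))
      ≤ c * (exp (a * r) * (exp (-(a * r) * c) / r - exp (-(a * s) * c) / s)) := by
        nlinarith [exp_le_exp.2 (mul_le_mul_of_nonneg_left hx ha),
          mul_nonneg hψ (zero_le_one.trans hc)]
    _ ≤ c * (exp (a * ε) * exp (-(a * ε) * c) * (1 / ε ^ 2 + a * c / ε) * (s - r)) :=
        mul_le_mul_of_nonneg_left (exp_mul_sub_exp_neg_mul_div_le ha hε hr hrs hc) (by linarith)
    _ = _ := by ring

lemma besselK_one_eq (z : ℝ) :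
    besselK 1 z = ∫ u in Ioi (0 : ℝ), exp (-z * cosh u) * cosh u := by
  simp only [besselK, one_mul]

theorem exists_abs_exp_mul_besselK_one_div_sub_le {a ε : ℝ} (ha : 0 < a) (hε : 0 < ε) :
    ∃ C, 0 ≤ C ∧ ∀ ⦃r s x : ℝ⦄, ε ≤ r → r ≤ s → x ≤ r →
      |exp (a * x) * (besselK 1 (a * r) / r - besselK 1 (a * s) / s)| ≤ C * (s - r) := by
  set g : ℝ → ℝ := fun u =>
    exp (a * ε) * exp (-(a * ε) * cosh u) * cosh u * (1 / ε ^ 2 + a * cosh u / ε)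
  have hg : IntegrableOn g (Ioi 0) := by
    have h1 := integrableOn_exp_neg_mul_cosh_mul_cosh_pow (mul_pos ha hε) 1
    have h2 := integrableOn_exp_neg_mul_cosh_mul_cosh_pow (mul_pos ha hε) 2
    refine IntegrableOn.congr_fun
      (((h1.const_mul (1 / ε ^ 2)).add (h2.const_mul (a / ε))).const_mul (exp (a * ε)))
      (fun u _ => ?_) measurableSet_Ioi
    simp only [g, Pi.add_apply]; ring
  refine ⟨∫ u in Ioi 0, g u, setIntegral_nonneg measurableSet_Ioi fun u _ => ?_,
    fun r s x hr hrs hx => ?_⟩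
  · have := cosh_pos u
    positivity
  have hr0 : 0 < r := hε.trans_le hr
  have hK (z : ℝ) (hz : 0 < z) := integrableOn_exp_neg_mul_cosh_mul_cosh_pow hz 1
  have hsplit : exp (a * x) * (besselK 1 (a * r) / r - besselK 1 (a * s) / s) =
      ∫ u in Ioi 0, exp (a * x) * (exp (-(a * r) * cosh u) * cosh u / r -
        exp (-(a * s) * cosh u) * cosh u / s) := by
    rw [integral_const_mul, integral_sub, integral_div, integral_div, besselK_one_eq,
      besselK_one_eq]
    · simpa using (hK _ (mul_pos ha hr0)).div_const r
    · simpa using (hK _ (mul_pos ha (hr0.trans_le hrs))).div_const s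
  rw [hsplit, ← integral_mul_const, ← Real.norm_eq_abs]
  refine norm_integral_le_of_norm_le (hg.mul_const _) (ae_of_all _ fun u => ?_)
  exact abs_exp_mul_sub_exp_neg_mul_div_le ha.le hε hr hrs hx (one_le_cosh u)

lemma tendstoUniformlyOn_of_dist_le {ι α β : Type*} [PseudoMetricSpace β] {F : ι → α → β}
    {f : α → β} {l : Filter ι} {S : Set α} {b : ι → ℝ} (hb : Tendsto b l (𝓝 0))
    (h : ∀ᶠ i in l, ∀ x ∈ S, dist (f x) (F i x) ≤ b i) : TendstoUniformlyOn F f l S := by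
  refine Metric.tendstoUniformlyOn_iff.2 fun δ hδ => ?_
  filter_upwards [h, hb.eventually (gt_mem_nhds hδ)] with i hi hbi x hx
  exact (hi x hx).trans_lt hbi

/-- For the Brownian motion with drift `a > 0` subordinated by an independent 1/2-stable
subordinator, `p_t(x)/t = (a e^{ax}/π) K₁(a√(x²+t²))/√(x²+t²)` converges to the Lévy density
`ν(x) = (a e^{ax}/π) K₁(a|x|)/|x|` uniformly on `{|x| ≥ ε}` as `t → 0⁺`. -/
theorem subordinated_density_small_time_uniform (a ε : ℝ) (ha : 0 < a) (hε : 0 < ε) :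
    TendstoUniformlyOn
      (fun t x => a * Real.exp (a * x) / π * besselK 1 (a * Real.sqrt (x ^ 2 + t ^ 2)) /
        Real.sqrt (x ^ 2 + t ^ 2))
      (fun x => a * Real.exp (a * x) / π * besselK 1 (a * |x|) / |x|)
      (𝓝[>] (0:ℝ)) {x : ℝ | ε ≤ |x|} := by
  obtain ⟨C, hC0, hC⟩ := exists_abs_exp_mul_besselK_one_div_sub_le ha hε
  refine tendstoUniformlyOn_of_dist_le (b := fun t => a / π * C * t) ?_ ?_
  · exact ((continuous_const.mul continuous_id).tendsto' 0 0 (by simp)).mono_left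
      nhdsWithin_le_nhds
  filter_upwards [self_mem_nhdsWithin] with t (ht : 0 < t) x (hx : ε ≤ |x|)
  set s := √(x ^ 2 + t ^ 2)
  have hxs : |x| ≤ s := abs_le_sqrt (by nlinarith)
  have hst : s ≤ |x| + t :=
    (sqrt_le_left (by positivity)).2 (by nlinarith [sq_abs x, abs_nonneg x])
  calc dist _ _
      = a / π * |exp (a * x) * (besselK 1 (a * |x|) / |x| - besselK 1 (a * s) / s)| := by
        rw [Real.dist_eq, ← abs_of_pos (div_pos ha pi_pos), ← abs_mul]; ring_nf
    _ ≤ a / π * (C * (s - |x|)) := by gcongr; exact hC hx hxs (le_abs_self x)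
    _ ≤ a / π * C * t := by
        rw [mul_assoc]; gcongr; linarith
end

section
/- Let a > 0. The function x ↦ a e^{ax} K₁(ax)/(π x) is non-increasing on (0, ∞). That is, the Lévy density of the Brownian motion with drift a subordinated by an independent 1/2-stable subordinator is non-increasing on the positive half-line. -/
open Real MeasureTheory

/-! Writing `e^{ax} K₁(ax) / x = ∫₀^∞ e^{-ax (cosh t - 1)} cosh t / x dt`, each integrand is a
product of two non-increasing positive functions of `x`, because `cosh t ≥ 1`. -/

lemma self_lt_cosh (t : ℝ) : t < cosh t := by
  rcases le_or_gt 0 t with ht | ht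
  · exact (self_le_sinh_iff.2 ht).trans_lt (sinh_lt_cosh t)
  · exact ht.trans (cosh_pos t)

lemma integrableOn_exp_neg_mul_cosh_mul_cosh {z : ℝ} (hz : 0 < z) :
    IntegrableOn (fun t => exp (-z * cosh t) * cosh t) (Set.Ioi 0) := by
  refine ((exp_neg_integrableOn_Ioi 0 (half_pos hz)).const_mul (2 / z * exp (-1))).mono'
    (by fun_prop) (ae_of_all _ fun t => ?_)
  -- `e^{-zc} c = (2/z) · (zc/2 · e^{-zc/2}) · e^{-zc/2}`: bound the middle factor by `y e^{-y} ≤ e^{-1}`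
  -- and the last by `t < cosh t`
  have hsplit : exp (-z * cosh t) * cosh t
      = 2 / z * (z / 2 * cosh t * exp (-(z / 2 * cosh t))) * exp (-(z / 2) * cosh t) := by
    have hhalves : exp (-z * cosh t) = exp (-(z / 2 * cosh t)) * exp (-(z / 2) * cosh t) := by
      rw [← exp_add]; ring_nf
    rw [hhalves]
    field_simp
  rw [norm_of_nonneg (by positivity), hsplit]
  have hdecay : -(z / 2) * cosh t ≤ -(z / 2) * t := by
    nlinarith [self_lt_cosh t]
  gcongr
  exact mul_exp_neg_le_exp_neg_one _

lemma antitoneOn_exp_mul_div_mul_exp_neg_mul {a c : ℝ} (ha : 0 ≤ a) (hc : 1 ≤ c) :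
    AntitoneOn (fun x => exp (a * x) / x * (exp (-(a * x) * c) * c)) (Set.Ioi 0) := by
  intro x hx y hy hxy
  have hcombine : ∀ u, exp (a * u) / u * (exp (-(a * u) * c) * c)
      = exp (-(a * (c - 1)) * u) * c / u := by
    intro u
    rw [div_mul_eq_mul_div, ← mul_assoc, ← exp_add]
    ring_nf
  simp only [hcombine]
  have hx : 0 < x := hx
  have hexp : exp (-(a * (c - 1)) * y) ≤ exp (-(a * (c - 1)) * x) :=
    exp_le_exp.2 (by nlinarith [mul_nonneg ha (sub_nonneg.2 hc)])
  gcongr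

lemma levy_density_eq_integral {a x : ℝ} (hx : 0 < x) :
    a * exp (a * x) * besselK 1 (a * x) / (π * x)
      = a / π * ∫ t in Set.Ioi 0, exp (a * x) / x * (exp (-(a * x) * cosh t) * cosh t) := by
  simp only [besselK, one_mul, neg_mul, integral_const_mul]
  field_simp

/-- The Lévy density `x ↦ a e^{ax} K₁(ax)/(π x)` of the Brownian motion with drift `a > 0`
subordinated by an independent 1/2-stable subordinator is non-increasing on `(0, ∞)`. -/
theorem subordinated_levy_density_antitone (a : ℝ) (ha : 0 < a) :
    AntitoneOn (fun x => a * Real.exp (a * x) * besselK 1 (a * x) / (π * x))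
      (Set.Ioi (0:ℝ)) := by
  intro x hx y hy hxy
  have hx' : 0 < x := hx
  have hy' : 0 < y := hy
  simp only [levy_density_eq_integral hx', levy_density_eq_integral hy']
  refine mul_le_mul_of_nonneg_left (setIntegral_mono_on ?_ ?_ measurableSet_Ioi
    fun t _ => antitoneOn_exp_mul_div_mul_exp_neg_mul ha.le (one_le_cosh t) hx hy hxy)
    (by positivity)
  · exact (integrableOn_exp_neg_mul_cosh_mul_cosh (by positivity)).const_mul _
  · exact (integrableOn_exp_neg_mul_cosh_mul_cosh (by positivity)).const_mul _
end
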